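/- arXiv:1712.04130 — 2 statements merged into one kernel-verified Lean document; each statement's English description precedes it below -/
import Mathlib

section
/- Let R be a relation on X × Y and suppose ∅ ≠ γ ∈ Φ_R with σ = ψ_R(γ) and |γ| = k ≥ 1. Then the following are equivalent: (a) γ is isotropic, i.e., every ordering of the elements of γ is an informative attribute release sequence for R; (b) γ is minimally identifying for σ, i.e., ψ_R(γ) = σ and ψ_R(γ') ⊋ σ for every γ' ⊊ γ. -/
def psiR {X Y : Type*} (R : Set (X × Y)) (γ : Set Y) : Set X := {x | ∀ y ∈ γ, (x, y) ∈ R}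

def phiR {X Y : Type*} (R : Set (X × Y)) (σ : Set X) : Set Y := {y | ∀ x ∈ σ, (x, y) ∈ R}

/-!
Both sides say that `γ` is independent for the closure operator `φ_R ∘ ψ_R`: no `y ∈ γ` lies in
the closure of `γ \ {y}`. Since `y ∈ φ_R (ψ_R s)` exactly when adding `y` to `s` does not shrink
`ψ_R s`, this is minimal identification (every proper subset of `γ` lies in some `γ \ {y}`). For
the release sequences, a non-informative step at `y` puts `y` in the closure of its prefix,
hence of `γ \ {y}` by monotonicity; conversely, releasing `γ \ {y}` first and `y` last is
non-informative at `y` when `y` is in that closure.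
-/

theorem List.Nodup.getElem_notMem_take {α : Type*} {l : List α} (hl : l.Nodup) {i : ℕ}
    (hi : i < l.length) : l[i] ∉ l.take i := fun hmem =>
  List.disjoint_take_drop hl le_rfl hmem (List.drop_eq_getElem_cons hi ▸ List.mem_cons_self)

section
variable {X Y : Type*} (R : Set (X × Y))

theorem psiR_antitone : Antitone (psiR R) := fun _ _ h _ hx y hy => hx y (h hy)

theorem phiR_antitone : Antitone (phiR R) := fun _ _ h _ hy x hx => hy x (h hx)

theorem phiR_psiR_monotone : Monotone (phiR R ∘ psiR R) :=
  (phiR_antitone R).comp (psiR_antitone R)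

theorem mem_phiR_psiR_iff {s : Set Y} {y : Y} :
    y ∈ phiR R (psiR R s) ↔ psiR R s ⊆ psiR R (insert y s) := by
  refine ⟨fun hy x hx z hz => ?_, fun h x hx => h hx y (Set.mem_insert y s)⟩
  rcases hz with rfl | hz
  · exact hy x hx
  · exact hx z hz

variable [DecidableEq Y]

def IsInformativeReleaseSeq (l : List Y) : Prop :=
  ∀ i : Fin l.length, l.get i ∉ phiR R (psiR R ↑(l.take i).toFinset)

def IsClosureIndependent (γ : Finset Y) : Prop :=
  ∀ y ∈ γ, y ∉ phiR R (psiR R ↑(γ.erase y))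

theorem isClosureIndependent_iff_forall_ssubset {γ : Finset Y} :
    IsClosureIndependent R γ ↔ ∀ γ' : Finset Y, γ' ⊂ γ → psiR R γ ⊂ psiR R γ' := by
  refine ⟨fun h γ' hγ' => ?_, fun h y hy hmem => ?_⟩
  · refine (psiR_antitone R (Finset.coe_subset.2 hγ'.subset)).ssubset_of_not_subset fun hsub => ?_
    obtain ⟨y, hyγ, hyγ'⟩ := Finset.exists_of_ssubset hγ'
    refine h y hyγ ((mem_phiR_psiR_iff R).2 ?_)
    rw [← Finset.coe_insert, Finset.insert_erase hyγ]
    exact (psiR_antitone R (Finset.coe_subset.2 (Finset.subset_erase.2 ⟨hγ'.subset, hyγ'⟩))).trans hsub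
  · rw [mem_phiR_psiR_iff, ← Finset.coe_insert, Finset.insert_erase hy] at hmem
    exact (h _ (Finset.erase_ssubset hy)).not_subset hmem

theorem forall_isInformativeReleaseSeq_iff_isClosureIndependent {γ : Finset Y} :
    (∀ l : List Y, l.Nodup → l.toFinset = γ → IsInformativeReleaseSeq R l) ↔
      IsClosureIndependent R γ := by
  refine ⟨fun h y hy hmem => ?_, fun h l hl hγ i hmem => ?_⟩
  · have hl : ((γ.erase y).toList ++ [y]).Nodup := by
      simp +contextual [List.nodup_append, Finset.nodup_toList]
    have hlast := h _ hl (by simp [Finset.insert_erase hy]) ⟨(γ.erase y).card, by simp⟩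
    exact absurd hmem (by simpa using hlast)
  · have hprefix : (l.take i).toFinset ⊆ γ.erase (l.get i) := fun a ha => by
      rw [List.mem_toFinset] at ha
      refine Finset.mem_erase.2 ⟨?_, hγ ▸ List.mem_toFinset.2 (List.mem_of_mem_take ha)⟩
      rintro rfl
      exact hl.getElem_notMem_take i.isLt ha
    exact h _ (hγ ▸ List.mem_toFinset.2 (List.get_mem l i))
      (phiR_psiR_monotone R (Finset.coe_subset.2 hprefix) hmem)

end

theorem isotropic_iff_minimally_identifying_general {X Y : Type*} [DecidableEq Y]
    (R : Set (X × Y)) (γ : Finset Y) :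
    (∀ l : List Y, l.Nodup → l.toFinset = γ →
      ∀ i : Fin l.length,
        l.get i ∉ phiR R (psiR R (((l.take (i : ℕ)).toFinset : Finset Y) : Set Y))) ↔
    (∀ γ' : Finset Y, γ' ⊂ γ →
      psiR R (↑γ : Set Y) ⊂ psiR R (↑γ' : Set Y)) :=
  (forall_isInformativeReleaseSeq_iff_isClosureIndependent R).trans
    (isClosureIndependent_iff_forall_ssubset R)

/-- Isotropy = minimal identification: for a nonempty simplex γ of Φ_R with
σ = ψ_R(γ), every ordering of γ is an informative attribute release sequence
iff γ is minimally identifying for σ (every proper subset of γ has strictly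
larger ψ-image). -/
theorem isotropic_iff_minimally_identifying {X Y : Type*}
    [Fintype X] [Fintype Y] [Nonempty X] [Nonempty Y] [DecidableEq Y]
    (R : Set (X × Y)) (γ : Finset Y) (hne : γ.Nonempty)
    (hsimp : (psiR R (↑γ : Set Y)).Nonempty) :
    (∀ l : List Y, l.Nodup → l.toFinset = γ →
      ∀ i : Fin l.length,
        l.get i ∉ phiR R (psiR R (((l.take (i : ℕ)).toFinset : Finset Y) : Set Y))) ↔
    (∀ γ' : Finset Y, γ' ⊂ γ →
      psiR R (↑γ : Set Y) ⊂ psiR R (↑γ' : Set Y)) :=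
  isotropic_iff_minimally_identifying_general R γ
end

section
/- Suppose Y consists of k binary attribute pairs {y_1, ȳ_1, …, y_k, ȳ_k} (k ≥ 1), and R is a relation on X × Y with X nonempty, in which every individual x has exactly one attribute from each pair {y_i, ȳ_i}, and all rows Y_x are distinct. Then R preserves attribute privacy if and only if |X| = 2^k (i.e., all 2^k possible attribute combinations are represented). -/
def rowSet {X Y : Type*} (R : Set (X × Y)) (x : X) : Set Y := {y | (x, y) ∈ R}

def AttrPrivacy {X Y : Type*} (R : Set (X × Y)) : Prop :=
  ∀ γ : Set Y, ((psiR R γ).Nonempty ∨ γ = ∅) → phiR R (psiR R γ) = γ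

/-!
Record each individual `x` by its row `f x : Fin k → Bool`; distinct rows make `f` injective,
so `|X| = 2^k` exactly when `f` is surjective, and privacy turns out to be equivalent to
surjectivity. If every row occurs, an attribute `(i, b)` outside `γ` is refuted inside `ψ γ` by
flipping coordinate `i` of a row in `ψ γ` to `!b`. Conversely, privacy lets one extend a partial
assignment realised by some individual one coordinate at a time: if no individual agreeing with
`g` on `s` had `g i` at `i`, they would all share the attribute `(i, !g i)`, which is not in the
graph of `g` on `s`.
-/

open Function

section General

variable {X Y : Type*} {R : Set (X × Y)}

theorem subset_phiR_psiR (γ : Set Y) : γ ⊆ phiR R (psiR R γ) :=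
  fun _ hy _ hx => hx _ hy

theorem AttrPrivacy.exists_mem_psiR_not_mem (h : AttrPrivacy R) {γ : Set Y}
    (hγ : (psiR R γ).Nonempty) {y : Y} (hy : y ∉ γ) : ∃ x ∈ psiR R γ, (x, y) ∉ R := by
  by_contra! hall
  exact hy (h γ (Or.inl hγ) ▸ hall)

end General

section Profile

variable {X ι : Type*}

def profileRel (f : X → ι → Bool) : Set (X × (ι × Bool)) := {p | f p.1 p.2.1 = p.2.2}

@[simp]
theorem mem_profileRel {f : X → ι → Bool} {x : X} {i : ι} {b : Bool} :
    (x, (i, b)) ∈ profileRel f ↔ f x i = b :=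
  Iff.rfl

theorem exists_eq_profileRel {R : Set (X × (ι × Bool))}
    (hexact : ∀ x i, Xor ((x, (i, true)) ∈ R) ((x, (i, false)) ∈ R)) :
    ∃ f : X → ι → Bool, R = profileRel f := by
  classical
  refine ⟨fun x i => decide ((x, (i, true)) ∈ R), ?_⟩
  ext ⟨x, i, b⟩
  rcases hexact x i with ⟨ht, hf⟩ | ⟨hf, ht⟩ <;> cases b <;> simp [ht, hf]

theorem injective_of_injective_rowSet_profileRel {f : X → ι → Bool}
    (h : Injective (rowSet (profileRel f))) : Injective f := by
  intro x x' hxx'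
  apply h
  ext ⟨i, b⟩
  simp [rowSet, hxx']

theorem attrPrivacy_profileRel_of_surjective {f : X → ι → Bool} (hf : Surjective f) :
    AttrPrivacy (profileRel f) := by
  classical
  intro γ hγ
  obtain ⟨x₀, hx₀⟩ : (psiR (profileRel f) γ).Nonempty := by
    rcases hγ with hne | rfl
    · exact hne
    · exact ⟨surjInv hf default, by simp [psiR]⟩
  refine Set.Subset.antisymm ?_ (subset_phiR_psiR γ)
  rintro ⟨i, b⟩ hib
  by_contra hnot
  obtain ⟨x, hx⟩ := hf (update (f x₀) i (!b))
  have hxψ : x ∈ psiR (profileRel f) γ := by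
    rintro ⟨j, c⟩ hjc
    rcases eq_or_ne j i with rfl | hji
    · have hcb : c ≠ b := by rintro rfl; exact hnot hjc
      simpa [hx] using Bool.eq_not.mpr hcb.symm
    · simpa [hx, hji] using hx₀ _ hjc
  simpa [hx] using hib x hxψ

theorem surjective_of_attrPrivacy_profileRel [Nonempty X] [Fintype ι] {f : X → ι → Bool}
    (h : AttrPrivacy (profileRel f)) : Surjective f := by
  classical
  intro g
  have hagree : ∀ s : Finset ι, ∃ x, ∀ j ∈ s, f x j = g j := by
    intro s
    induction s using Finset.induction_on with
    | empty => exact ⟨Classical.arbitrary X, by simp⟩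
    | insert i s _ ih =>
      obtain ⟨x₀, hx₀⟩ := ih
      have hψ : (psiR (profileRel f) ((fun j => (j, g j)) '' s)).Nonempty :=
        ⟨x₀, by simpa [psiR] using hx₀⟩
      have hflip : (i, !g i) ∉ (fun j => (j, g j)) '' s := by simp
      obtain ⟨x, hxψ, hxi⟩ := h.exists_mem_psiR_not_mem hψ hflip
      refine ⟨x, Finset.forall_mem_insert _ _ _ |>.2 ⟨by simpa using hxi, ?_⟩⟩
      simpa [psiR] using hxψ
  obtain ⟨x, hx⟩ := hagree Finset.univ
  exact ⟨x, funext fun j => hx j (Finset.mem_univ j)⟩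

theorem attrPrivacy_profileRel_iff_surjective [Nonempty X] [Fintype ι] (f : X → ι → Bool) :
    AttrPrivacy (profileRel f) ↔ Surjective f :=
  ⟨surjective_of_attrPrivacy_profileRel, attrPrivacy_profileRel_of_surjective⟩

end Profile

theorem binary_pairs_privacy_iff_card_general {X : Type*} [Fintype X] [Nonempty X]
    (k : ℕ) (R : Set (X × (Fin k × Bool)))
    (hexact : ∀ (x : X) (i : Fin k),
      Xor' ((x, (i, true)) ∈ R) ((x, (i, false)) ∈ R))
    (hdistinct : ∀ x x' : X, rowSet R x = rowSet R x' → x = x') :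
    AttrPrivacy R ↔ Fintype.card X = 2 ^ k := by
  obtain ⟨f, rfl⟩ := exists_eq_profileRel hexact
  have hf : Injective f := injective_of_injective_rowSet_profileRel hdistinct
  have hcard : Fintype.card (Fin k → Bool) = 2 ^ k := by simp
  rw [attrPrivacy_profileRel_iff_surjective, ← hcard]
  exact ⟨fun hs => Fintype.card_of_bijective ⟨hf, hs⟩,
    fun hc => ((Fintype.bijective_iff_injective_and_card f).2 ⟨hf, hc⟩).surjective⟩

/-- Privacy requires many individuals: with k binary attribute pairs (attributes
(i, true) and (i, false) for i : Fin k), where every individual has exactly one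
attribute from each pair and all rows are distinct, R preserves attribute
privacy iff all 2^k possible attribute combinations are represented. -/
theorem binary_pairs_privacy_iff_card {X : Type*} [Fintype X] [Nonempty X]
    (k : ℕ) (hk : 1 ≤ k) (R : Set (X × (Fin k × Bool)))
    (hexact : ∀ (x : X) (i : Fin k),
      Xor' ((x, (i, true)) ∈ R) ((x, (i, false)) ∈ R))
    (hdistinct : ∀ x x' : X, rowSet R x = rowSet R x' → x = x') :
    AttrPrivacy R ↔ Fintype.card X = 2 ^ k :=
  binary_pairs_privacy_iff_card_general k R hexact hdistinct
end
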